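/- arXiv:math/0203052 — 2 statements merged into one kernel-verified Lean document; each statement's English description precedes it below -/
import Mathlib

section
/- Let (W,S) be a Coxeter system with S finite and fix g ∈ W. Define d'(u,v) = |(N_u △ N_v) \ N_g| for u, v ∈ W. Then (i) ℓ(u⁻¹v) = |(N_g ∩ N_u) △ (N_g ∩ N_v)| + d'(u,v) for all u, v ∈ W, and (ii) d' is a negative definite kernel on W: for all u₁, …, uₙ ∈ W and c₁, …, cₙ ∈ ℂ with ∑ c_i = 0, the sum ∑_{i,j} c_i · conj(c_j) · d'(u_i, u_j) is a real number ≤ 0. -/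
open scoped BigOperators ComplexOrder symmDiff

/-- The set of left inversions of `g`: reflections `t` with `ℓ(tg) < ℓ(g)`. -/
def leftInversionSet {B W : Type*} [Group W] {M : CoxeterMatrix B}
    (cs : CoxeterSystem M W) (g : W) : Set W :=
  {t : W | cs.IsLeftInversion g t}

/-- The kernel `d'(u,v) = |(N_u △ N_v) \ N_g|`. -/
noncomputable def dPrime {B W : Type*} [Group W] {M : CoxeterMatrix B}
    (cs : CoxeterSystem M W) (g u v : W) : ℕ :=
  ((leftInversionSet cs u ∆ leftInversionSet cs v) \ leftInversionSet cs g).ncard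

open List CoxeterSystem
namespace CoxAux
variable {B W : Type*} [Group W] {M : CoxeterMatrix B} (cs : CoxeterSystem M W)
local prefix:100 "s" => cs.simple
local prefix:100 "π" => cs.wordProd
local prefix:100 "ℓ" => cs.length
local prefix:100 "ris" => cs.rightInvSeq
local prefix:100 "lis" => cs.leftInvSeq


open scoped Classical in
/-- The basic toggle map on `W × ℤˣ` associated to a simple reflection. -/
noncomputable def toggle (i : B) : W × ℤˣ → W × ℤˣ :=
  fun x => (s i * x.1 * s i, if x.1 = s i then -x.2 else x.2)

theorem simple_conj_eq_simple_iff (i : B) (u : W) :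
    s i * u * s i = s i ↔ u = s i := by
  constructor
  · intro h
    have h2 : u = (s i)⁻¹ * (s i * u * s i) * (s i)⁻¹ := by group
    rw [h] at h2
    simpa [cs.inv_simple] using h2
  · intro h
    rw [h, mul_assoc, cs.simple_mul_simple_self i, mul_one]

theorem toggle_involutive (i : B) : Function.Involutive (toggle cs i) := by
  rintro ⟨t, ε⟩
  have hs : s i * s i = 1 := cs.simple_mul_simple_self i
  have h1 : s i * (s i * t * s i) * s i = t := by
    have h : s i * (s i * t * s i) * s i = (s i * s i) * t * (s i * s i) := by group
    rw [h, hs, one_mul, mul_one]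
  simp only [toggle]
  refine Prod.ext h1 ?_
  dsimp only
  by_cases h : t = s i
  · have hcnd : s i * t * s i = s i := (simple_conj_eq_simple_iff cs i t).mpr h
    simp [hcnd, h]
  · have hcnd : ¬(s i * t * s i = s i) := fun hc => h ((simple_conj_eq_simple_iff cs i t).mp hc)
    simp [hcnd, h]

/-- The permutation of `W × ℤˣ` associated to a simple reflection. -/
noncomputable def phi (i : B) : Equiv.Perm (W × ℤˣ) := (toggle_involutive cs i).toPerm

@[simp] theorem phi_apply (i : B) (x : W × ℤˣ) : phi cs i x = toggle cs i x := rfl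

theorem prod_map_phi [DecidableEq W] (ω : List B) (t : W) (ε : ℤˣ) :
    ((ω.map (phi cs)).prod) (t, ε)
      = (π ω * t * (π ω)⁻¹, if Odd ((ris ω).count t) then -ε else ε) := by
  induction ω with
  | nil => simp
  | cons i ω ih =>
    have hris : ris (i :: ω) = ((π ω)⁻¹ * s i * π ω) :: ris ω := rfl
    rw [map_cons, prod_cons, Equiv.Perm.mul_apply, ih]
    have hcond : (π ω * t * (π ω)⁻¹ = s i) ↔ (t = (π ω)⁻¹ * s i * π ω) := by
      constructor
      · intro h
        have h2 : t = (π ω)⁻¹ * (π ω * t * (π ω)⁻¹) * π ω := by group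
        rw [h] at h2
        exact h2
      · intro h; rw [h]; group
    rw [phi_apply, toggle]
    refine Prod.ext ?_ ?_
    · show s i * (π ω * t * (π ω)⁻¹) * s i = π (i :: ω) * t * (π (i :: ω))⁻¹
      rw [cs.wordProd_cons, mul_inv_rev, cs.inv_simple]
      group
    · dsimp only
      rw [hris, count_cons]
      by_cases h : t = (π ω)⁻¹ * s i * π ω
      · have hcnd : π ω * t * (π ω)⁻¹ = s i := hcond.mpr h
        have hbe : ((π ω)⁻¹ * s i * π ω == t) = true := by simp [h]
        simp only [hcnd, if_pos rfl, hbe, if_true, Nat.odd_add_one]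
        by_cases hc : Odd ((ris ω).count t) <;> simp [hc]
      · have hcnd : ¬(π ω * t * (π ω)⁻¹ = s i) := fun hc => h (hcond.mp hc)
        have hne : ¬((π ω)⁻¹ * s i * π ω = t) := fun he => h he.symm
        simp [hcnd, hne]



theorem alt_append (i i' : B) (p q : ℕ) :
    alternatingWord i i' (p + q)
      = alternatingWord (if Even q then i else i') (if Even q then i' else i) p
        ++ alternatingWord i i' q := by
  induction p with
  | zero => by_cases hq : Even q <;> simp [hq, alternatingWord]
  | succ p ih =>
    have h : p + 1 + q = (p + q) + 1 := by omega
    rw [h, alternatingWord_succ', ih, alternatingWord_succ']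
    by_cases hq : Even q <;> by_cases hp : Even p <;>
      simp [hq, hp, Nat.even_add, cons_append]

theorem ris_cons (i : B) (ω : List B) :
    ris (i :: ω) = ((π ω)⁻¹ * s i * π ω) :: ris ω := rfl

theorem ris_append (ω₁ ω₂ : List B) :
    ris (ω₁ ++ ω₂) = (ris ω₁).map (fun t => (π ω₂)⁻¹ * t * π ω₂) ++ ris ω₂ := by
  induction ω₁ with
  | nil => simp
  | cons i ω₁ ih =>
    rw [cons_append, ris_cons cs, ris_cons cs, ih, map_cons, cons_append]
    congr 1
    rw [cs.wordProd_append, mul_inv_rev]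
    group

theorem alt_drop (i i' : B) : ∀ (n r : ℕ),
    (alternatingWord i i' n).drop r = alternatingWord i i' (n - r) := by
  intro n
  induction n with
  | zero => intro r; simp [alternatingWord]
  | succ n ih =>
    intro r
    rw [alternatingWord_succ']
    match r with
    | 0 => simp [alternatingWord_succ']
    | r + 1 => rw [drop_succ_cons, ih r]; congr 1; omega

theorem alt_get? (i i' : B) : ∀ (n k : ℕ), k < n →
    (alternatingWord i i' n)[k]? = some (if Even (n - k - 1) then i' else i) := by
  intro n
  induction n with
  | zero => intro k hk; omega
  | succ n ih =>
    intro k hk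
    rw [alternatingWord_succ']
    match k with
    | 0 => simp
    | k + 1 =>
      rw [getElem?_cons_succ, ih k (by omega)]
      have h : n + 1 - (k + 1) - 1 = n - k - 1 := by omega
      rw [h]



theorem sjsi (i j : B) : s j * s i = (s i * s j)⁻¹ := by
  rw [mul_inv_rev, cs.inv_simple, cs.inv_simple]

theorem sjsisj (i j : B) : s j * s i * s j = (s i * s j) ^ (-1 : ℤ) * s j := by
  rw [zpow_neg, zpow_one, mul_inv_rev, cs.inv_simple, cs.inv_simple]

theorem sj_conj_zpow (i j : B) (z : ℤ) :
    s j * (s i * s j) ^ z = (s i * s j) ^ (-z) * s j := by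
  have h1 : (MulAut.conj (s j)) (s i * s j) = (s i * s j)⁻¹ := by
    rw [MulAut.conj_apply, cs.inv_simple, mul_inv_rev, cs.inv_simple, cs.inv_simple]
    calc s j * (s i * s j) * s j = (s j * s i) * (s j * s j) := by group
    _ = s j * s i := by rw [cs.simple_mul_simple_self, mul_one]
  calc s j * (s i * s j) ^ z = (MulAut.conj (s j)) ((s i * s j) ^ z) * s j := by
        rw [MulAut.conj_apply, cs.inv_simple, mul_assoc, cs.simple_mul_simple_self, mul_one]
  _ = ((s i * s j)⁻¹) ^ z * s j := by rw [map_zpow, h1]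
  _ = (s i * s j) ^ (-z) * s j := by rw [inv_zpow, ← zpow_neg]

theorem ris_alt_getD (i j : B) (n k : ℕ) (hk : k < n) :
    (ris (alternatingWord i j n)).getD k 1
      = (s i * s j) ^ (-((n - k - 1 : ℕ) : ℤ)) * s j := by
  rw [cs.getD_rightInvSeq, alt_drop, alt_get? i j n k hk]
  have hnk : n - (k + 1) = n - k - 1 := by omega
  rw [hnk]
  set r := n - k - 1 with hr
  rcases Nat.even_or_odd r with he | ho
  · obtain ⟨a, ha⟩ := he
    rw [cs.prod_alternatingWord_eq_mul_pow, if_pos (ha ▸ ⟨a, rfl⟩ : Even r)]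
    simp only [Option.map_some, Option.getD_some, if_pos (ha ▸ ⟨a, rfl⟩ : Even r)]
    rw [one_mul, ha]
    have hdiv : (a + a) / 2 = a := by omega
    rw [hdiv]
    calc ((s i * s j) ^ a)⁻¹ * s j * (s i * s j) ^ a
        = (s i * s j) ^ (-(a : ℤ)) * (s j * (s i * s j) ^ (a : ℤ)) := by
          rw [← zpow_natCast (s i * s j) a, ← zpow_neg, mul_assoc]
    _ = (s i * s j) ^ (-(a : ℤ)) * ((s i * s j) ^ (-(a : ℤ)) * s j) := by
          rw [sj_conj_zpow]
    _ = (s i * s j) ^ (-(a : ℤ) + -(a : ℤ)) * s j := by rw [← mul_assoc, ← zpow_add]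
    _ = (s i * s j) ^ (-((a + a : ℕ) : ℤ)) * s j := by
          congr 1
          push_cast
          ring
  · obtain ⟨a, ha⟩ := ho
    have hne : ¬ Even r := by rw [ha]; simp [Nat.even_add_one, parity_simps]
    rw [cs.prod_alternatingWord_eq_mul_pow, if_neg hne]
    simp only [Option.map_some, Option.getD_some, if_neg hne]
    rw [ha]
    have hdiv : (2 * a + 1) / 2 = a := by omega
    rw [hdiv]
    calc (s j * (s i * s j) ^ a)⁻¹ * s i * (s j * (s i * s j) ^ a)
        = (s i * s j) ^ (-(a : ℤ)) * ((s j * s i * s j) * (s i * s j) ^ (a : ℤ)) := by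
          rw [mul_inv_rev, cs.inv_simple, ← zpow_natCast (s i * s j) a, ← zpow_neg]
          group
    _ = (s i * s j) ^ (-(a : ℤ)) * ((s i * s j) ^ (-1 : ℤ) * (s j * (s i * s j) ^ (a : ℤ))) := by
          rw [sjsisj, mul_assoc]
    _ = (s i * s j) ^ (-(a : ℤ)) * ((s i * s j) ^ (-1 : ℤ) * ((s i * s j) ^ (-(a : ℤ)) * s j)) := by
          rw [sj_conj_zpow]
    _ = (s i * s j) ^ (-(a : ℤ) + -1 + -(a : ℤ)) * s j := by
          rw [zpow_add, zpow_add]; group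
    _ = (s i * s j) ^ (-((2 * a + 1 : ℕ) : ℤ)) * s j := by
          congr 1
          push_cast
          ring

theorem hpm_inv (i j : B) : (s i * s j) ^ (-(M i j : ℤ)) = 1 := by
  rw [zpow_neg, zpow_natCast, cs.simple_mul_simple_pow, inv_one]

private theorem dihedral_even {G : Type*} [Group G] (p sj : G) (c r : ℤ)
    (hconj : ∀ z : ℤ, sj * p ^ z = p ^ (-z) * sj) (hz : p ^ (c + c) = 1) :
    (p ^ c)⁻¹ * (p ^ (-r) * sj) * p ^ c = p ^ (-r) * sj := by
  calc (p ^ c)⁻¹ * (p ^ (-r) * sj) * p ^ c = p ^ (-c) * p ^ (-r) * (sj * p ^ c) := by group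
  _ = p ^ (-c) * p ^ (-r) * (p ^ (-c) * sj) := by rw [hconj]
  _ = (p ^ (c + c))⁻¹ * (p ^ (-r) * sj) := by group
  _ = p ^ (-r) * sj := by rw [hz, inv_one, one_mul]

private theorem dihedral_odd {G : Type*} [Group G] (p sj si : G) (c r : ℤ)
    (hconj : ∀ z : ℤ, sj * p ^ z = p ^ (-z) * sj) (hsj : sj * sj = 1)
    (hsjsi : sj * si = p⁻¹) (hz : p ^ (c + c + 1) = 1) :
    (sj * p ^ c)⁻¹ * (p ^ r * si) * (sj * p ^ c) = p ^ (-r) * sj := by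
  have hinv : sj⁻¹ = sj := inv_eq_of_mul_eq_one_right hsj
  calc (sj * p ^ c)⁻¹ * (p ^ r * si) * (sj * p ^ c)
      = p ^ (-c) * (sj * p ^ r) * (si * sj) * p ^ c := by rw [mul_inv_rev, hinv]; group
  _ = p ^ (-c) * (p ^ (-r) * sj) * (si * sj) * p ^ c := by rw [hconj]
  _ = p ^ (-c) * p ^ (-r) * (sj * si) * (sj * p ^ c) := by group
  _ = p ^ (-c) * p ^ (-r) * p⁻¹ * (sj * p ^ c) := by rw [hsjsi]
  _ = p ^ (-c) * p ^ (-r) * p⁻¹ * (p ^ (-c) * sj) := by rw [hconj]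
  _ = (p ^ (c + c + 1))⁻¹ * (p ^ (-r) * sj) := by group
  _ = p ^ (-r) * sj := by rw [hz, inv_one, one_mul]

theorem map_conj_ris_alt (i j : B) :
    (ris (alternatingWord (if Even (M i j) then i else j) (if Even (M i j) then j else i)
        (M i j))).map
      (fun u => (π (alternatingWord i j (M i j)))⁻¹ * u * π (alternatingWord i j (M i j)))
      = ris (alternatingWord i j (M i j)) := by
  set m := M i j with hm
  apply List.ext_getElem
  · simp
  · intro k h1 h2
    have hk : k < m := by simpa using h2
    rw [getElem_map, ← List.getD_eq_getElem _ 1, ← List.getD_eq_getElem _ 1,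
      ris_alt_getD cs _ _ m k hk, ris_alt_getD cs i j m k hk]
    set r := m - k - 1 with hr
    rcases Nat.even_or_odd m with hme | hmo
    · rw [if_pos hme, if_pos hme]
      obtain ⟨c, hc⟩ := hme
      rw [cs.prod_alternatingWord_eq_mul_pow, if_pos ⟨c, hc⟩, one_mul, hc]
      have hdiv : (c + c) / 2 = c := by omega
      rw [hdiv, ← zpow_natCast (s i * s j) c]
      have hz : (s i * s j) ^ ((c : ℤ) + (c : ℤ)) = 1 := by
        have hcast : ((c : ℤ) + (c : ℤ)) = ((c + c : ℕ) : ℤ) := by push_cast; ring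
        rw [hcast, zpow_natCast, ← hc, hm, cs.simple_mul_simple_pow]
      exact dihedral_even (s i * s j) (s j) (c : ℤ) (r : ℤ)
        (fun z => sj_conj_zpow cs i j z) hz
    · rw [if_neg (Nat.not_even_iff_odd.mpr hmo), if_neg (Nat.not_even_iff_odd.mpr hmo)]
      obtain ⟨c, hc⟩ := hmo
      rw [cs.prod_alternatingWord_eq_mul_pow, if_neg (Nat.not_even_iff_odd.mpr ⟨c, hc⟩), hc]
      have hdiv : (2 * c + 1) / 2 = c := by omega
      rw [hdiv, ← zpow_natCast (s i * s j) c]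
      have hji : (s j * s i) ^ (-(r : ℤ)) = (s i * s j) ^ (r : ℤ) := by
        rw [sjsi, inv_zpow, ← zpow_neg, neg_neg]
      rw [hji]
      have hz : (s i * s j) ^ ((c : ℤ) + (c : ℤ) + 1) = 1 := by
        have hcast : ((c : ℤ) + (c : ℤ) + 1) = ((2 * c + 1 : ℕ) : ℤ) := by push_cast; ring
        rw [hcast, zpow_natCast, ← hc, hm, cs.simple_mul_simple_pow]
      exact dihedral_odd (s i * s j) (s j) (s i) (c : ℤ) (r : ℤ)
        (fun z => sj_conj_zpow cs i j z) (cs.simple_mul_simple_self j)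
        (sjsi cs i j) hz

theorem count_ris_alt_even [DecidableEq W] (i j : B) (t : W) :
    ¬ Odd ((ris (alternatingWord i j (2 * M i j))).count t) := by
  have h2m : 2 * M i j = M i j + M i j := by ring
  rw [h2m, alt_append i j (M i j) (M i j), ris_append, count_append, map_conj_ris_alt cs i j,
    Nat.odd_add]
  intro h
  rcases Nat.even_or_odd ((ris (alternatingWord i j (M i j))).count t) with he | ho
  · exact (Nat.not_even_iff_odd.mpr (h.mpr he)) he
  · exact (Nat.not_even_iff_odd.mpr ho) (h.mp ho)


theorem pow_phi_eq_prod_map (i j : B) (m : ℕ) :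
    (phi cs i * phi cs j) ^ m = ((alternatingWord i j (2 * m)).map (phi cs)).prod := by
  induction m with
  | zero => simp [alternatingWord]
  | succ m ih =>
    have h1 : 2 * (m + 1) = (2 * m) + 1 + 1 := by ring
    have e1 : ¬ Even (2 * m + 1) := by simp [Nat.even_add_one, parity_simps]
    have e2 : Even (2 * m) := ⟨m, by ring⟩
    rw [h1, alternatingWord_succ', alternatingWord_succ', if_neg e1, if_pos e2,
      map_cons, map_cons, prod_cons, prod_cons, ← ih, ← mul_assoc, ← pow_succ']

theorem phi_liftable : M.IsLiftable (phi cs) := by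
  classical
  intro i j
  rw [pow_phi_eq_prod_map]
  apply Equiv.ext
  rintro ⟨t, ε⟩
  rw [prod_map_phi]
  have hπ : π (alternatingWord i j (2 * M i j)) = 1 := by
    have h := cs.prod_alternatingWord_eq_mul_pow i j (2 * M i j)
    rw [if_pos ⟨M i j, by ring⟩, one_mul, (by omega : 2 * M i j / 2 = M i j),
      cs.simple_mul_simple_pow] at h
    exact h
  rw [hπ, if_neg (count_ris_alt_even cs i j t)]
  simp

/-- The sign representation `W →* Perm (W × ℤˣ)`. -/
noncomputable def Phi : W →* Equiv.Perm (W × ℤˣ) := cs.lift ⟨phi cs, phi_liftable cs⟩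

theorem Phi_simple (i : B) : Phi cs (s i) = phi cs i := cs.lift_apply_simple (phi_liftable cs) i

theorem Phi_wordProd (ω : List B) : Phi cs (π ω) = (ω.map (phi cs)).prod := by
  induction ω with
  | nil => simp [cs.wordProd_nil]
  | cons i ω ih => rw [cs.wordProd_cons, map_mul, ih, map_cons, prod_cons, Phi_simple]

/-- The sign of `t` under the action of `w`. -/
noncomputable def sgn (w t : W) : ℤˣ := (Phi cs w (t, 1)).2

theorem Phi_apply (w t : W) (ε : ℤˣ) : Phi cs w (t, ε) = (w * t * w⁻¹, ε * sgn cs w t) := by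
  classical
  obtain ⟨ω, rfl⟩ := cs.wordProd_surjective w
  by_cases h : Odd (((ris ω)).count t) <;>
    simp [sgn, Phi_wordProd, prod_map_phi, h]

theorem sgn_mul (u v t : W) : sgn cs (u * v) t = sgn cs v t * sgn cs u (v * t * v⁻¹) := by
  show (Phi cs (u * v) (t, 1)).2 = _
  rw [map_mul, Equiv.Perm.mul_apply, Phi_apply cs v t 1, Phi_apply cs u]
  simp

theorem sgn_one (t : W) : sgn cs 1 t = 1 := by simp [sgn]

theorem sgn_inv_mul_cancel (u t : W) : sgn cs u⁻¹ t * sgn cs u (u⁻¹ * t * u) = 1 := by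
  have h := sgn_mul cs u u⁻¹ t
  rw [mul_inv_cancel, sgn_one, inv_inv] at h
  exact h.symm

theorem sgn_simple_self (i : B) : sgn cs (s i) (s i) = -1 := by
  simp [sgn, Phi_simple, toggle]

theorem sgn_refl_self {t : W} (ht : cs.IsReflection t) : sgn cs t t = -1 := by
  obtain ⟨w, i, rfl⟩ := ht
  have e1 : w * s i * w⁻¹ = w * (s i * w⁻¹) := by group
  have harg1 : (s i * w⁻¹) * (w * s i * w⁻¹) * (s i * w⁻¹)⁻¹ = s i := by
    rw [mul_inv_rev, cs.inv_simple, inv_inv]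
    have h2 : (s i * w⁻¹) * (w * s i * w⁻¹) * (w * s i) = s i * s i * s i := by group
    rw [h2, cs.simple_mul_simple_self, one_mul]
  have harg2 : w⁻¹ * (w * s i * w⁻¹) * w = s i := by group
  have hmain := sgn_mul cs w (s i * w⁻¹) (w * s i * w⁻¹)
  rw [← e1, harg1] at hmain
  have hmain2 := sgn_mul cs (s i) w⁻¹ (w * s i * w⁻¹)
  rw [inv_inv, harg2] at hmain2
  have hcancel := sgn_inv_mul_cancel cs w (w * s i * w⁻¹)
  rw [harg2] at hcancel
  rw [hmain, hmain2, sgn_simple_self, mul_comm (sgn cs w⁻¹ (w * s i * w⁻¹)) (-1 : ℤˣ),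
    mul_assoc, hcancel, mul_one]


theorem sgn_eq_ite [DecidableEq W] (ω : List B) (t : W) :
    sgn cs (π ω) t = (if Odd ((ris ω).count t) then (-1 : ℤˣ) else 1) := by
  show (Phi cs (π ω) (t, 1)).2 = _
  rw [Phi_wordProd, prod_map_phi]

theorem mem_ris_iff_sgn_eq_neg_one {ω : List B} (hω : cs.IsReduced ω) (t : W) :
    t ∈ ris ω ↔ sgn cs (π ω) t = -1 := by
  classical
  rw [sgn_eq_ite]
  constructor
  · intro hmem
    rw [List.count_eq_one_of_mem hω.nodup_rightInvSeq hmem]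
    simp
  · intro hneg
    by_contra hmem
    rw [List.count_eq_zero_of_not_mem hmem] at hneg
    simp at hneg

theorem isRightInversion_iff_sgn {w t : W} (ht : cs.IsReflection t) :
    cs.IsRightInversion w t ↔ sgn cs w t = -1 := by
  have hrev : ∀ v : W, sgn cs v t = -1 → cs.IsRightInversion v t := by
    intro v hv
    obtain ⟨ω, hred, rfl⟩ := cs.exists_reduced_word' v
    exact cs.isRightInversion_of_mem_rightInvSeq hred
      ((mem_ris_iff_sgn_eq_neg_one cs hred t).mpr hv)
  constructor
  · rintro ⟨-, hlt⟩
    have hs1 := sgn_mul cs (w * t) t t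
    have e1 : w * t * t = w := by rw [mul_assoc, ht.mul_self, mul_one]
    have e2 : t * t * t⁻¹ = t := by rw [ht.mul_self, one_mul, ht.inv]
    rw [e1, e2, sgn_refl_self cs ht] at hs1
    rcases Int.units_eq_one_or (sgn cs (w * t) t) with h1 | h1
    · rw [h1, mul_one] at hs1
      exact hs1
    · exfalso
      have hinv := hrev (w * t) h1
      have := hinv.2
      rw [e1] at this
      omega
  · exact hrev w


theorem mem_leftInversionSet_iff {w t : W} :
    t ∈ leftInversionSet cs w ↔ (cs.IsReflection t ∧ sgn cs w⁻¹ t = -1) := by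
  constructor
  · intro h
    have h1 : cs.IsRightInversion w⁻¹ t := cs.isRightInversion_inv_iff.mpr h
    exact ⟨h1.1, (isRightInversion_iff_sgn cs h1.1).mp h1⟩
  · rintro ⟨htr, hs⟩
    exact cs.isRightInversion_inv_iff.mp ((isRightInversion_iff_sgn cs htr).mpr hs)

theorem leftInversionSet_eq (w : W) {ω : List B} (hω : cs.IsReduced ω) (hw : w = π ω) :
    leftInversionSet cs w = {t | t ∈ lis ω} := by
  ext t
  simp only [leftInversionSet, Set.mem_setOf_eq]
  constructor
  · intro ht'
    have htr : cs.IsReflection t := ht'.1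
    have h1 : cs.IsRightInversion w⁻¹ t := cs.isRightInversion_inv_iff.mpr ht'
    have h2 : sgn cs w⁻¹ t = -1 := (isRightInversion_iff_sgn cs htr).mp h1
    have hrev : cs.IsReduced ω.reverse := (cs.isReduced_reverse_iff ω).mpr hω
    have h3 : π ω.reverse = w⁻¹ := by rw [cs.wordProd_reverse, ← hw]
    have h4 : t ∈ ris ω.reverse :=
      (mem_ris_iff_sgn_eq_neg_one cs hrev t).mpr (by rw [h3]; exact h2)
    rw [cs.rightInvSeq_reverse] at h4
    simpa using h4
  · intro hmem
    rw [hw]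
    exact cs.isLeftInversion_of_mem_leftInvSeq hω hmem

theorem leftInversionSet_finite (w : W) : (leftInversionSet cs w).Finite := by
  obtain ⟨ω, hred, hw⟩ := cs.exists_reduced_word' w
  rw [leftInversionSet_eq cs w hred hw]
  exact List.finite_toSet _

theorem ncard_leftInversionSet (w : W) : (leftInversionSet cs w).ncard = ℓ w := by
  classical
  obtain ⟨ω, hred, hw⟩ := cs.exists_reduced_word' w
  rw [leftInversionSet_eq cs w hred hw]
  have h1 : {t | t ∈ lis ω} = (↑(lis ω).toFinset : Set W) := by
    simp [List.coe_toFinset]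
  rw [h1, Set.ncard_coe_finset, List.toFinset_card_of_nodup hred.nodup_leftInvSeq,
    cs.length_leftInvSeq, hw]
  exact hred.symm

theorem symmDiff_leftInversionSet (u v : W) :
    leftInversionSet cs u ∆ leftInversionSet cs v
      = (fun t => u * t * u⁻¹) '' leftInversionSet cs (u⁻¹ * v) := by
  classical
  ext t
  have himg : (t ∈ (fun t => u * t * u⁻¹) '' leftInversionSet cs (u⁻¹ * v))
      ↔ u⁻¹ * t * u ∈ leftInversionSet cs (u⁻¹ * v) := by
    constructor
    · rintro ⟨x, hx, rfl⟩
      have e : u⁻¹ * (u * x * u⁻¹) * u = x := by group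
      rwa [e]
    · intro h
      exact ⟨u⁻¹ * t * u, h, by group⟩
  rw [Set.mem_symmDiff, himg]
  by_cases htr : cs.IsReflection t
  · have htr' : cs.IsReflection (u⁻¹ * t * u) := by
      have h := htr.conj u⁻¹
      rwa [inv_inv] at h
    have hkey : sgn cs ((u⁻¹ * v)⁻¹) (u⁻¹ * t * u) = sgn cs u⁻¹ t * sgn cs v⁻¹ t := by
      rw [mul_inv_rev, inv_inv, sgn_mul cs v⁻¹ u (u⁻¹ * t * u)]
      have e : u * (u⁻¹ * t * u) * u⁻¹ = t := by group
      rw [e]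
      have hc := sgn_inv_mul_cancel cs u t
      have ha : sgn cs u⁻¹ t * sgn cs u⁻¹ t = 1 := by
        rcases Int.units_eq_one_or (sgn cs u⁻¹ t) with h | h <;> rw [h] <;> decide
      have hb : sgn cs u (u⁻¹ * t * u) = sgn cs u⁻¹ t := by
        calc sgn cs u (u⁻¹ * t * u)
            = (sgn cs u⁻¹ t * sgn cs u⁻¹ t) * sgn cs u (u⁻¹ * t * u) := by rw [ha, one_mul]
        _ = sgn cs u⁻¹ t * (sgn cs u⁻¹ t * sgn cs u (u⁻¹ * t * u)) := by rw [mul_assoc]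
        _ = sgn cs u⁻¹ t := by rw [hc, mul_one]
      rw [hb, mul_comm]
    simp only [mem_leftInversionSet_iff cs, htr, htr', true_and, hkey]
    rcases Int.units_eq_one_or (sgn cs u⁻¹ t) with h1 | h1 <;>
      rcases Int.units_eq_one_or (sgn cs v⁻¹ t) with h2 | h2 <;>
      rw [h1, h2] <;> decide
  · have htr' : ¬ cs.IsReflection (u⁻¹ * t * u) := by
      intro hcon
      have h := hcon.conj u
      have e : u * (u⁻¹ * t * u) * u⁻¹ = t := by group
      rw [e] at h
      exact htr h
    simp [mem_leftInversionSet_iff cs, htr, htr']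

theorem length_eq_ncard_symmDiff (u v : W) :
    ℓ (u⁻¹ * v) = (leftInversionSet cs u ∆ leftInversionSet cs v).ncard := by
  have hinj : Function.Injective (fun t : W => u * t * u⁻¹) := by
    intro a b hab
    dsimp at hab
    exact mul_left_cancel (mul_right_cancel hab)
  rw [symmDiff_leftInversionSet cs u v, Set.ncard_image_of_injective _ hinj,
    ncard_leftInversionSet]

end CoxAux

/-- For a Coxeter system `(W,S)` with `S` finite and a fixed `g ∈ W`:
(i) `ℓ(u⁻¹v) = |(N_g ∩ N_u) △ (N_g ∩ N_v)| + d'(u,v)` for all `u, v ∈ W`, and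
(ii) `d'` is a negative definite kernel on `W`. -/
theorem length_decomposition_and_dPrime_negdef {B W : Type*} [Group W] [Finite B]
    (M : CoxeterMatrix B) (cs : CoxeterSystem M W) (g : W) :
    (∀ u v : W,
      cs.length (u⁻¹ * v)
        = ((leftInversionSet cs g ∩ leftInversionSet cs u)
            ∆ (leftInversionSet cs g ∩ leftInversionSet cs v)).ncard
          + dPrime cs g u v) ∧
    (∀ (n : ℕ) (u : Fin n → W) (c : Fin n → ℂ), (∑ i, c i) = 0 →
      ∑ i, ∑ j, c i * (starRingEnd ℂ) (c j) * (dPrime cs g (u i) (u j) : ℂ) ≤ 0) := by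
  constructor
  · intro u v
    classical
    have hfinS : (leftInversionSet cs u ∆ leftInversionSet cs v).Finite :=
      ((CoxAux.leftInversionSet_finite cs u).union
        (CoxAux.leftInversionSet_finite cs v)).subset Set.symmDiff_subset_union
    have hdec := Set.ncard_inter_add_ncard_diff_eq_ncard
      (leftInversionSet cs u ∆ leftInversionSet cs v) (leftInversionSet cs g) hfinS
    have hinter : (leftInversionSet cs u ∆ leftInversionSet cs v) ∩ leftInversionSet cs g
        = (leftInversionSet cs g ∩ leftInversionSet cs u)
            ∆ (leftInversionSet cs g ∩ leftInversionSet cs v) := by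
      rw [Set.inter_comm]
      exact inf_symmDiff_distrib_left _ _ _
    rw [CoxAux.length_eq_ncard_symmDiff cs u v, ← hdec, hinter]
    rfl
  · intro n u c hc
    classical
    have hfin : ∀ k : Fin n, ((leftInversionSet cs (u k)) \ (leftInversionSet cs g)).Finite :=
      fun k => (CoxAux.leftInversionSet_finite cs (u k)).diff
    set F : Fin n → Finset W := fun k => (hfin k).toFinset with hF
    have hd : ∀ k l : Fin n, dPrime cs g (u k) (u l) = ((F k) ∆ (F l)).card := by
      intro k l
      have hsd : (leftInversionSet cs (u k) ∆ leftInversionSet cs (u l)) \ leftInversionSet cs g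
          = ((leftInversionSet cs (u k)) \ leftInversionSet cs g)
              ∆ ((leftInversionSet cs (u l)) \ leftInversionSet cs g) := by
        simp only [Set.diff_eq]
        exact inf_symmDiff_distrib_right _ _ _
      rw [dPrime, hsd, ← (hfin k).coe_toFinset, ← (hfin l).coe_toFinset, ← Finset.coe_symmDiff,
        Set.ncard_coe_finset]
    have hcard2 : ∀ s t : Finset W,
        (((s ∆ t).card : ℕ) : ℂ) = (s.card : ℂ) + (t.card : ℂ) - 2 * ((s ∩ t).card : ℂ) := by
      intro s t
      have h1 : (s ∆ t).card = (s \ t).card + (t \ s).card := by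
        rw [symmDiff_def, Finset.sup_eq_union]
        exact Finset.card_union_of_disjoint disjoint_sdiff_sdiff
      have h2 := Finset.card_sdiff_add_card_inter s t
      have h3 := Finset.card_sdiff_add_card_inter t s
      rw [Finset.inter_comm] at h3
      have h4 : (s ∆ t).card + 2 * (s ∩ t).card = s.card + t.card := by omega
      have h5 := congrArg (fun x : ℕ => (x : ℂ)) h4
      push_cast at h5
      linear_combination h5
    have h0c : ∑ j, (starRingEnd ℂ) (c j) = 0 := by rw [← map_sum, hc, map_zero]
    set T : Finset W := Finset.univ.biUnion F with hT
    set ind : Fin n → W → ℂ := fun k t => if t ∈ F k then 1 else 0 with hind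
    have hcap : ∀ k l : Fin n, (((F k ∩ F l).card : ℕ) : ℂ) = ∑ t ∈ T, ind k t * ind l t := by
      intro k l
      have he : ∀ t, ind k t * ind l t = if t ∈ F k ∩ F l then (1 : ℂ) else 0 := by
        intro t
        simp only [hind, Finset.mem_inter]
        by_cases h1 : t ∈ F k <;> by_cases h2 : t ∈ F l <;> simp [h1, h2]
      rw [Finset.sum_congr rfl (fun t _ => he t), Finset.sum_ite_mem]
      have hsub : T ∩ (F k ∩ F l) = F k ∩ F l := by
        apply Finset.inter_eq_right.mpr
        intro x hx
        exact Finset.mem_biUnion.mpr ⟨k, Finset.mem_univ k, (Finset.mem_inter.mp hx).1⟩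
      rw [hsub, Finset.sum_const, nsmul_eq_mul, mul_one]
    set z : W → ℂ := fun t => ∑ i, c i * ind i t with hz
    have hzc : ∀ t, (starRingEnd ℂ) (z t) = ∑ j, (starRingEnd ℂ) (c j) * ind j t := by
      intro t
      rw [hz]
      dsimp only
      rw [map_sum]
      refine Finset.sum_congr rfl fun j _ => ?_
      rw [map_mul]
      congr 1
      simp only [hind]
      split_ifs <;> simp
    have hC : ∑ i, ∑ j, c i * (starRingEnd ℂ) (c j) * (((F i ∩ F j).card : ℕ) : ℂ)
        = ((∑ t ∈ T, Complex.normSq (z t) : ℝ) : ℂ) := by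
      calc ∑ i, ∑ j, c i * (starRingEnd ℂ) (c j) * (((F i ∩ F j).card : ℕ) : ℂ)
          = ∑ i, ∑ j, ∑ t ∈ T, (c i * ind i t) * ((starRingEnd ℂ) (c j) * ind j t) := by
            refine Finset.sum_congr rfl fun i _ => Finset.sum_congr rfl fun j _ => ?_
            rw [hcap i j, Finset.mul_sum]
            exact Finset.sum_congr rfl fun t _ => by ring
      _ = ∑ i, ∑ t ∈ T, ∑ j, (c i * ind i t) * ((starRingEnd ℂ) (c j) * ind j t) :=
            Finset.sum_congr rfl fun i _ => Finset.sum_comm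
      _ = ∑ t ∈ T, ∑ i, ∑ j, (c i * ind i t) * ((starRingEnd ℂ) (c j) * ind j t) :=
            Finset.sum_comm
      _ = ∑ t ∈ T, (∑ i, c i * ind i t) * (∑ j, (starRingEnd ℂ) (c j) * ind j t) := by
            refine Finset.sum_congr rfl fun t _ => ?_
            rw [Finset.sum_mul_sum]
      _ = ∑ t ∈ T, z t * (starRingEnd ℂ) (z t) := by
            refine Finset.sum_congr rfl fun t _ => ?_
            rw [hzc t]
      _ = ((∑ t ∈ T, Complex.normSq (z t) : ℝ) : ℂ) := by
            push_cast
            exact Finset.sum_congr rfl fun t _ => Complex.mul_conj (z t)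
    have hA : ∑ i, ∑ j, c i * (starRingEnd ℂ) (c j) * (((F i).card : ℕ) : ℂ) = 0 := by
      calc ∑ i, ∑ j, c i * (starRingEnd ℂ) (c j) * (((F i).card : ℕ) : ℂ)
          = ∑ i, (c i * (((F i).card : ℕ) : ℂ)) * ∑ j, (starRingEnd ℂ) (c j) := by
            refine Finset.sum_congr rfl fun i _ => ?_
            rw [Finset.mul_sum]
            exact Finset.sum_congr rfl fun j _ => by ring
      _ = 0 := by simp [h0c]
    have hB : ∑ i, ∑ j, c i * (starRingEnd ℂ) (c j) * (((F j).card : ℕ) : ℂ) = 0 := by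
      calc ∑ i, ∑ j, c i * (starRingEnd ℂ) (c j) * (((F j).card : ℕ) : ℂ)
          = ∑ i, c i * ∑ j, (starRingEnd ℂ) (c j) * (((F j).card : ℕ) : ℂ) := by
            refine Finset.sum_congr rfl fun i _ => ?_
            rw [Finset.mul_sum]
            exact Finset.sum_congr rfl fun j _ => by ring
      _ = (∑ i, c i) * ∑ j, (starRingEnd ℂ) (c j) * (((F j).card : ℕ) : ℂ) := by
            rw [← Finset.sum_mul]
      _ = 0 := by rw [hc, zero_mul]
    have hsplit : ∑ i, ∑ j, c i * (starRingEnd ℂ) (c j) * (dPrime cs g (u i) (u j) : ℂ)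
        = ∑ i, ∑ j, (c i * (starRingEnd ℂ) (c j) * (((F i).card : ℕ) : ℂ)
            + c i * (starRingEnd ℂ) (c j) * (((F j).card : ℕ) : ℂ)
            - 2 * (c i * (starRingEnd ℂ) (c j) * (((F i ∩ F j).card : ℕ) : ℂ))) := by
      refine Finset.sum_congr rfl fun i _ => Finset.sum_congr rfl fun j _ => ?_
      rw [hd i j, hcard2 (F i) (F j)]
      ring
    rw [hsplit]
    simp only [Finset.sum_sub_distrib, Finset.sum_add_distrib, ← Finset.mul_sum]
    rw [hA, hB, hC, zero_add, zero_sub]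
    have hnn : (0 : ℝ) ≤ ∑ t ∈ T, Complex.normSq (z t) :=
      Finset.sum_nonneg fun t _ => Complex.normSq_nonneg _
    have hcast : -(2 * ((∑ t ∈ T, Complex.normSq (z t) : ℝ) : ℂ))
        = (((-(2 * ∑ t ∈ T, Complex.normSq (z t))) : ℝ) : ℂ) := by push_cast; ring
    rw [hcast, show (0 : ℂ) = ((0 : ℝ) : ℂ) by norm_num, Complex.real_le_real]
    linarith
end

section
/- Let (W,S) be a Coxeter system with S finite and let 0 < r < 1. For every n and all pairwise distinct elements u₁, …, uₙ ∈ W, the n × n complex matrix with entries (r^{ℓ(u_i⁻¹ u_j)})_{i,j=1}^n is invertible; equivalently, if c₁, …, cₙ ∈ ℂ satisfy ∑_{i,j=1}^n c_i · conj(c_j) · r^{ℓ(u_i⁻¹ u_j)} = 0, then all c_i = 0. -/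
namespace BozejkoAux

open CoxeterSystem List
open scoped Classical

variable {B : Type*} {W : Type*} [Group W] {M : CoxeterMatrix B} (cs : CoxeterSystem M W)

local prefix:100 "s" => cs.simple
local prefix:100 "π" => cs.wordProd

/-- The basic involution of `W × ZMod 2` attached to a simple reflection. -/
noncomputable def fmap (i : B) : W × ZMod 2 → W × ZMod 2 :=
  fun p => (s i * p.1 * s i, p.2 + if p.1 = s i then 1 else 0)

lemma conj_simple_eq_iff (i : B) (x : W) : s i * x * s i = s i ↔ x = s i := by
  constructor
  · intro h
    have := congrArg (fun y => s i * y * s i) h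
    simpa [mul_assoc, cs.simple_mul_simple_cancel_left, cs.simple_mul_simple_self] using this
  · rintro rfl
    simp [cs.simple_mul_simple_self]

lemma fmap_involutive (i : B) : Function.Involutive (fmap cs i) := by
  rintro ⟨x, ε⟩
  simp only [fmap, conj_simple_eq_iff, Prod.mk.injEq]
  constructor
  · simp [mul_assoc, cs.simple_mul_simple_self, cs.simple_mul_simple_cancel_left]
  · rcases eq_or_ne x (s i) with h | h
    · simp only [h, if_pos rfl]
      rw [if_pos trivial, add_assoc, show ((1:ZMod 2) + 1 : ZMod 2) = 0 from rfl, add_zero]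
    · simp [h]

/-- The permutation of `W × ZMod 2` attached to a simple reflection. -/
noncomputable def fperm (i : B) : Equiv.Perm (W × ZMod 2) := (fmap_involutive cs i).toPerm

@[simp] lemma fperm_apply (i : B) (p : W × ZMod 2) : fperm cs i p = fmap cs i p := rfl

/-- Product of the permutations along a word. -/
noncomputable def tprod (ω : List B) : Equiv.Perm (W × ZMod 2) := (ω.map (fperm cs)).prod

@[simp] lemma tprod_nil : tprod cs ([] : List B) = 1 := rfl

lemma tprod_cons (i : B) (ω : List B) : tprod cs (i :: ω) = fperm cs i * tprod cs ω := by
  simp [tprod]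

lemma rightInvSeq_cons (i : B) (ω : List B) :
    cs.rightInvSeq (i :: ω) = ((π ω)⁻¹ * s i * π ω) :: cs.rightInvSeq ω := rfl

lemma tprod_apply (ω : List B) (t : W) (ε : ZMod 2) :
    tprod cs ω (t, ε) = (π ω * t * (π ω)⁻¹, ε + ((cs.rightInvSeq ω).count t : ZMod 2)) := by
  induction ω generalizing ε with
  | nil => simp
  | cons i ω ih =>
      rw [tprod_cons, Equiv.Perm.mul_apply, ih]
      simp only [fperm_apply, fmap, rightInvSeq_cons, cs.wordProd_cons, List.count_cons,
        Prod.mk.injEq]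
      constructor
      · simp [mul_inv_rev, cs.inv_simple, mul_assoc]
      · have : (π ω * t * (π ω)⁻¹ = s i) ↔ ((π ω)⁻¹ * s i * π ω = t) := by
          constructor
          · intro h; rw [← h]; group
          · intro h; rw [← h]; group
        rcases eq_or_ne ((π ω)⁻¹ * s i * π ω) t with h | h
        · simp [this.mpr h, h]
          push_cast
          ring
        · have h' : ¬ (π ω * t * (π ω)⁻¹ = s i) := fun hh => h (this.mp hh)
          simp [h', h]
lemma drop_one_alternatingWord (i j : B) (c : ℕ) :
    (alternatingWord i j c).drop 1 = alternatingWord i j (c - 1) := by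
  cases c with
  | zero => rfl
  | succ c => rw [alternatingWord_succ']; simp

lemma drop_alternatingWord (i j : B) (n d : ℕ) :
    (alternatingWord i j n).drop d = alternatingWord i j (n - d) := by
  induction d with
  | zero => simp
  | succ d ih =>
      have : (alternatingWord i j n).drop (d + 1) = ((alternatingWord i j n).drop d).drop 1 := by
        rw [List.drop_drop]
      rw [this, ih, drop_one_alternatingWord, Nat.sub_sub]

lemma get?_alternatingWord (i j : B) (n k : ℕ) (hk : k < n) :
    (alternatingWord i j n)[k]? = some (if Even (n - k - 1) then j else i) := by
  have h1 : (alternatingWord i j n)[k]? = ((alternatingWord i j n).drop k)[0]? := by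
    simp [List.getElem?_drop]
  rw [h1, drop_alternatingWord]
  have h2 : n - k = (n - k - 1) + 1 := by omega
  rw [h2, alternatingWord_succ']
  rfl

lemma simple_conj_pow (i j : B) (k : ℕ) :
    s j * (s i * s j) ^ k = ((s i * s j) ^ k)⁻¹ * s j := by
  induction k with
  | zero => simp
  | succ k ih =>
      have base : s j * (s i * s j) = (s i * s j)⁻¹ * s j := by
        rw [mul_inv_rev, cs.inv_simple, cs.inv_simple]
        group
      have h1 : s j * (s i * s j) ^ (k + 1)
          = ((s i * s j) ^ k)⁻¹ * (s j * (s i * s j)) := by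
        rw [pow_succ, ← mul_assoc, ih, mul_assoc]
      rw [h1, base, ← mul_assoc, ← mul_inv_rev, ← pow_succ']

/-- The uniform value of conjugates along an alternating word. -/
lemma tval_eq (i j : B) (c : ℕ) :
    (π (alternatingWord i j c))⁻¹ * (if Even c then s j else s i) * π (alternatingWord i j c)
      = ((s i * s j) ^ c)⁻¹ * s j := by
  rw [cs.prod_alternatingWord_eq_mul_pow]
  rcases Nat.even_or_odd c with hc | hc
  · obtain ⟨a, rfl⟩ := hc
    have h2 : (a + a) / 2 = a := by omega
    rw [if_pos ⟨a, rfl⟩, if_pos ⟨a, rfl⟩, h2, one_mul]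
    rw [mul_assoc, simple_conj_pow cs i j a, ← mul_assoc, ← mul_inv_rev, ← pow_add]
  · obtain ⟨a, rfl⟩ := hc
    have h2 : (2 * a + 1) / 2 = a := by omega
    have hodd : ¬ Even (2 * a + 1) := by simp [Nat.even_add_one, parity_simps]
    rw [if_neg hodd, if_neg hodd, h2]
    have key : s j * s i * s j = (s i * s j)⁻¹ * s j := by
      rw [mul_inv_rev, cs.inv_simple, cs.inv_simple]
    calc (s j * (s i * s j) ^ a)⁻¹ * s i * (s j * (s i * s j) ^ a)
        = ((s i * s j) ^ a)⁻¹ * (s j * s i * s j) * (s i * s j) ^ a := by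
          rw [mul_inv_rev, cs.inv_simple]; group
      _ = ((s i * s j) ^ a)⁻¹ * ((s i * s j)⁻¹ * (s j * (s i * s j) ^ a)) := by
          rw [key]; group
      _ = ((s i * s j) ^ a)⁻¹ * ((s i * s j)⁻¹ * (((s i * s j) ^ a)⁻¹ * s j)) := by
          rw [simple_conj_pow cs i j a]
      _ = ((s i * s j) ^ (2 * a + 1))⁻¹ * s j := by
          rw [show 2 * a + 1 = a + 1 + a by omega, pow_add, pow_succ]
          group

/-- Entries of the right inversion sequence of an alternating word. -/
lemma getD_ris_alternatingWord (i j : B) (n k : ℕ) (hk : k < n) :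
    (cs.rightInvSeq (alternatingWord i j n)).getD k 1
      = ((s i * s j) ^ (n - k - 1))⁻¹ * s j := by
  rw [cs.getD_rightInvSeq, drop_alternatingWord, get?_alternatingWord i j n k hk,
    show n - (k + 1) = n - k - 1 from rfl]
  simp only [Option.map_some, Option.getD_some, apply_ite cs.simple]
  exact tval_eq cs i j (n - k - 1)

lemma tprod_alternatingWord (i j : B) (m : ℕ) :
    tprod cs (alternatingWord i j (2 * m)) = (fperm cs i * fperm cs j) ^ m := by
  induction m with
  | zero => simp [show alternatingWord i j 0 = [] from rfl]
  | succ m ih =>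
      have h1 : 2 * (m + 1) = (2 * m + 1) + 1 := by omega
      rw [h1, alternatingWord_succ', alternatingWord_succ']
      rw [if_neg (by simp [Nat.even_add_one, parity_simps]), if_pos (by exact ⟨m, by omega⟩)]
      rw [tprod_cons, tprod_cons, ih, pow_succ']
      rw [mul_assoc]

lemma take_drop_ris_alternatingWord (i j : B) :
    (cs.rightInvSeq (alternatingWord i j (2 * M i j))).drop (M i j)
      = (cs.rightInvSeq (alternatingWord i j (2 * M i j))).take (M i j) := by
  set m := M i j with hm
  set L := cs.rightInvSeq (alternatingWord i j (2 * m)) with hL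
  have hlen : L.length = 2 * m := by simp [hL]
  apply List.ext_getElem
  · simp [hlen]; omega
  · intro k h1 h2
    have hk : k < m := by simp [hlen] at h1; omega
    have e1 : (L.drop m)[k] = L.getD (m + k) 1 := by
      rw [List.getElem_drop, List.getD_eq_getElem]
    have e2 : (L.take m)[k] = L.getD k 1 := by
      rw [List.getElem_take, List.getD_eq_getElem]
    rw [e1, e2, hL, getD_ris_alternatingWord cs i j _ _ (by omega),
      getD_ris_alternatingWord cs i j _ _ (by omega)]
    have h3 : 2 * m - k - 1 = (2 * m - (m + k) - 1) + m := by omega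
    rw [h3, pow_add, hm, cs.simple_mul_simple_pow i j, mul_one]

lemma count_ris_alternatingWord_even (i j : B) (t : W) :
    Even ((cs.rightInvSeq (alternatingWord i j (2 * M i j))).count t) := by
  have h : (cs.rightInvSeq (alternatingWord i j (2 * M i j))).count t
      = ((cs.rightInvSeq (alternatingWord i j (2 * M i j))).take (M i j)).count t
        + ((cs.rightInvSeq (alternatingWord i j (2 * M i j))).drop (M i j)).count t := by
    conv_lhs => rw [← List.take_append_drop (M i j)
      (cs.rightInvSeq (alternatingWord i j (2 * M i j)))]
    rw [List.count_append]
  rw [h, take_drop_ris_alternatingWord cs i j]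
  exact ⟨_, rfl⟩

lemma isLiftable : M.IsLiftable (fun i => fperm cs i) := by
  intro i j
  rw [← tprod_alternatingWord]
  ext ⟨t, ε⟩
  · rw [tprod_apply]
    have hπ : π (alternatingWord i j (2 * M i j)) = 1 := by
      rw [cs.prod_alternatingWord_eq_mul_pow, if_pos ⟨M i j, by omega⟩,
        one_mul, show 2 * M i j / 2 = M i j by omega, cs.simple_mul_simple_pow i j]
    rw [hπ]
    simp
  · rw [tprod_apply]
    have hc : ((cs.rightInvSeq (alternatingWord i j (2 * M i j))).count t : ZMod 2) = 0 := by
      obtain ⟨x, hx⟩ := count_ris_alternatingWord_even cs i j t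
      rw [hx]
      push_cast
      ring_nf
      rw [show ((2 : ZMod 2)) = 0 from rfl]
      ring
    simp [hc]

/-- The reflection-cocycle representation of `W` on `W × ZMod 2`. -/
noncomputable def tau : W →* Equiv.Perm (W × ZMod 2) :=
  cs.lift ⟨fun i => fperm cs i, isLiftable cs⟩

lemma tau_simple (i : B) : tau cs (s i) = fperm cs i :=
  cs.lift_apply_simple (isLiftable cs) i

lemma tau_wordProd (ω : List B) : tau cs (π ω) = tprod cs ω := by
  induction ω with
  | nil => simp [tau]
  | cons i ω ih => rw [cs.wordProd_cons, map_mul, ih, tprod_cons, tau_simple]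

/-- The parity cocycle. -/
noncomputable def eta (w t : W) : ZMod 2 := (tau cs w (t, 0)).2

lemma eta_wordProd (ω : List B) (t : W) :
    eta cs (π ω) t = ((cs.rightInvSeq ω).count t : ZMod 2) := by
  rw [eta, tau_wordProd, tprod_apply]
  simp

lemma tau_apply (w t : W) (ε : ZMod 2) :
    tau cs w (t, ε) = (w * t * w⁻¹, ε + eta cs w t) := by
  obtain ⟨ω, rfl⟩ := cs.wordProd_surjective w
  rw [tau_wordProd, tprod_apply, eta_wordProd]

lemma eta_mul (a b t : W) :
    eta cs (a * b) t = eta cs a (b * t * b⁻¹) + eta cs b t := by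
  have h1 : tau cs (a * b) (t, 0) = tau cs a (tau cs b (t, 0)) := by
    rw [map_mul]; rfl
  rw [eta, h1, tau_apply cs b t 0, tau_apply cs a _ _, eta]
  simp [tau_apply, add_comm]

lemma eta_one_elem (t : W) : eta cs 1 t = 0 := by
  have h := eta_wordProd cs [] t
  simpa using h

lemma eta_simple (i : B) (t : W) : eta cs (s i) t = if t = s i then 1 else 0 := by
  have h := eta_wordProd cs [i] t
  rw [cs.wordProd_singleton] at h
  rw [h]
  rcases eq_or_ne t (s i) with rfl | ht
  · simp [cs.rightInvSeq_singleton]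
  · simp [cs.rightInvSeq_singleton, List.count_singleton', ht, Ne.symm ht]

lemma zmod2_cases (x : ZMod 2) : x = 0 ∨ x = 1 := by revert x; decide

lemma eta_inv (a t : W) : eta cs a⁻¹ t = eta cs a (a⁻¹ * t * a) := by
  have h := eta_mul cs a a⁻¹ t
  rw [mul_inv_cancel, eta_one_elem, inv_inv] at h
  have hh : ∀ x y : ZMod 2, 0 = x + y → y = x := by decide
  exact hh _ _ h

lemma eta_reflection_self {t : W} (ht : cs.IsReflection t) : eta cs t t = 1 := by
  obtain ⟨u, i, rfl⟩ := ht
  set t := u * s i * u⁻¹ with htdef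
  have key1 : (s i * u⁻¹) * t * (s i * u⁻¹)⁻¹ = s i := by
    rw [htdef, mul_inv_rev, cs.inv_simple, inv_inv]
    group
    simp [mul_assoc, cs.simple_mul_simple_self, cs.simple_mul_simple_cancel_left]
  have key2 : u⁻¹ * t * u = s i := by rw [htdef]; group
  have h1 : eta cs t t = eta cs u (s i) + eta cs (s i * u⁻¹) t := by
    have := eta_mul cs u (s i * u⁻¹) t
    rw [show u * (s i * u⁻¹) = t by rw [htdef]; group, key1] at this
    exact this
  have h2 : eta cs (s i * u⁻¹) t = eta cs (s i) (u⁻¹ * t * u) + eta cs u⁻¹ t := by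
    have := eta_mul cs (s i) u⁻¹ t
    rw [inv_inv] at this
    exact this
  have h3 : eta cs u⁻¹ t = eta cs u (s i) := by rw [eta_inv, key2]
  rw [h1, h2, h3, key2, eta_simple, if_pos rfl]
  have hh : ∀ x : ZMod 2, x + (1 + x) = 1 := by decide
  exact hh _

lemma length_mul_lt_of_eta_eq_one {w t : W} (h : eta cs w t = 1) :
    cs.length (w * t) < cs.length w := by
  obtain ⟨ω, hred, rfl⟩ := cs.exists_reduced_word' w
  rw [eta_wordProd] at h
  have hmem : t ∈ cs.rightInvSeq ω := by
    by_contra hmem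
    rw [List.count_eq_zero_of_not_mem hmem] at h
    simp at h
  exact (cs.isRightInversion_of_mem_rightInvSeq hred hmem).2

lemma eta_eq_zero_of_le {w t : W} (h : cs.length w ≤ cs.length (w * t)) :
    eta cs w t = 0 := by
  rcases zmod2_cases (eta cs w t) with h0 | h1
  · exact h0
  · exact absurd (length_mul_lt_of_eta_eq_one cs h1) (by omega)

lemma eta_eq_one_of_lt {w t : W} (ht : cs.IsReflection t)
    (h : cs.length (w * t) < cs.length w) : eta cs w t = 1 := by
  have h1 : eta cs w t = eta cs (w * t) t + eta cs t t := by
    have h2 := eta_mul cs (w * t) t t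
    have e1 : w * t * t = w := by rw [mul_assoc, ht.mul_self, mul_one]
    have e2 : t * t * t⁻¹ = t := by rw [ht.mul_self, one_mul, ht.inv]
    rw [e1, e2] at h2
    exact h2
  have h3 : eta cs (w * t) t = 0 := by
    apply eta_eq_zero_of_le
    rw [mul_assoc, ht.mul_self, mul_one]
    omega
  rw [h1, h3, eta_reflection_self cs ht, zero_add]

/-- The (right) inversion set of `w`, as a `Finset`. -/
noncomputable def invFinset (w : W) : Finset W :=
  (cs.rightInvSeq (cs.exists_reduced_word' w).choose).toFinset

lemma invFinset_spec (w : W) :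
    cs.IsReduced (cs.exists_reduced_word' w).choose ∧
      w = π (cs.exists_reduced_word' w).choose :=
  (cs.exists_reduced_word' w).choose_spec

lemma mem_invFinset (w t : W) : t ∈ invFinset cs w ↔ eta cs w t = 1 := by
  obtain ⟨hred, hw⟩ := invFinset_spec cs w
  rw [invFinset, List.mem_toFinset]
  constructor
  · intro hmem
    have h := cs.isRightInversion_of_mem_rightInvSeq hred hmem
    rw [hw]
    exact eta_eq_one_of_lt cs h.1 (hw ▸ h.2)
  · intro h1
    rw [hw, eta_wordProd] at h1
    by_contra hmem
    rw [List.count_eq_zero_of_not_mem hmem] at h1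
    simp at h1

lemma card_invFinset (w : W) : (invFinset cs w).card = cs.length w := by
  obtain ⟨hred, hw⟩ := invFinset_spec cs w
  rw [invFinset, List.toFinset_card_of_nodup (hred.nodup_rightInvSeq),
    cs.length_rightInvSeq, ← hred, ← hw]

/-- The left wall-set of `w` : right inversions of `w⁻¹`. -/
noncomputable def NL (w : W) : Finset W := invFinset cs w⁻¹

lemma mem_NL (w t : W) : t ∈ NL cs w ↔ eta cs w⁻¹ t = 1 := mem_invFinset cs w⁻¹ t

lemma mem_NL_simple_mul (i : B) (u t : W) :
    t ∈ NL cs (s i * u) ↔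
      eta cs u⁻¹ (s i * t * s i) + (if t = s i then 1 else 0) = 1 := by
  rw [mem_NL]
  have h1 : (s i * u)⁻¹ = u⁻¹ * s i := by rw [mul_inv_rev, cs.inv_simple]
  rw [h1, eta_mul, eta_simple]
  have h2 : s i * t * (s i)⁻¹ = s i * t * s i := by rw [cs.inv_simple]
  rw [h2]

lemma mem_symmDiff_NL (i : B) (u v t : W) :
    t ∈ symmDiff (NL cs (s i * u)) (NL cs (s i * v)) ↔
      s i * t * s i ∈ symmDiff (NL cs u) (NL cs v) := by
  rw [Finset.mem_symmDiff, Finset.mem_symmDiff, mem_NL_simple_mul, mem_NL_simple_mul,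
    mem_NL, mem_NL]
  have key : ∀ a b c : ZMod 2,
      ((a + c = 1 ∧ ¬(b + c = 1)) ∨ (b + c = 1 ∧ ¬(a + c = 1))) ↔
        ((a = 1 ∧ ¬ b = 1) ∨ (b = 1 ∧ ¬ a = 1)) := by decide
  exact key _ _ _

lemma card_symmDiff_NL_simple (i : B) (u v : W) :
    (symmDiff (NL cs (s i * u)) (NL cs (s i * v))).card
      = (symmDiff (NL cs u) (NL cs v)).card := by
  apply Finset.card_bij' (fun t _ => s i * t * s i) (fun t _ => s i * t * s i)
  · intro a ha
    exact (mem_symmDiff_NL cs i u v a).mp ha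
  · intro a ha
    rw [mem_symmDiff_NL cs i u v]
    simpa [mul_assoc, cs.simple_mul_simple_self, cs.simple_mul_simple_cancel_left] using ha
  · intro a _
    simp [mul_assoc, cs.simple_mul_simple_self, cs.simple_mul_simple_cancel_left]
  · intro a _
    simp [mul_assoc, cs.simple_mul_simple_self, cs.simple_mul_simple_cancel_left]

lemma card_symmDiff_NL (u v : W) :
    (symmDiff (NL cs u) (NL cs v)).card = cs.length (u⁻¹ * v) := by
  generalize hn : cs.length u = n
  induction n using Nat.strong_induction_on generalizing u v with
  | _ n ih =>
    rcases eq_or_ne u 1 with rfl | hu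
    · have hN1 : NL cs 1 = ∅ := by
        apply Finset.card_eq_zero.mp
        rw [NL, card_invFinset]
        simp
      rw [hN1]
      have : symmDiff (∅ : Finset W) (NL cs v) = NL cs v := by
        simp [symmDiff_def]
      rw [this, NL, card_invFinset, cs.length_inv]
      simp
    · obtain ⟨i, hi⟩ := cs.exists_leftDescent_of_ne_one hu
      have hlt : cs.length (s i * u) < n := hn ▸ hi
      have h1 := card_symmDiff_NL_simple cs i (s i * u) (s i * v)
      rw [cs.simple_mul_simple_cancel_left, cs.simple_mul_simple_cancel_left] at h1
      have h2 := ih (cs.length (s i * u)) hlt (s i * u) (s i * v) rfl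
      have h3 : (s i * u)⁻¹ * (s i * v) = u⁻¹ * v := by
        rw [mul_inv_rev, cs.inv_simple, mul_assoc, ← mul_assoc (s i),
          cs.simple_mul_simple_self, one_mul]
      rw [h1, h2, h3]

lemma NL_injective : Function.Injective (NL cs) := by
  intro u v h
  have h1 := card_symmDiff_NL cs u v
  rw [h, symmDiff_self] at h1
  have : cs.length (u⁻¹ * v) = 0 := by simpa using h1.symm
  exact inv_mul_eq_one.mp (cs.length_eq_zero_iff.mp this)

section Hypercube

open Finset

variable {X : Type*} [DecidableEq X]

/-- The character `(-1)^{|E ∩ A|}`. -/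
def sgn (E A : Finset X) : ℝ := (-1 : ℝ) ^ (E ∩ A).card

lemma prod_sgn_factor (E A : Finset X) :
    (∏ t ∈ E, if t ∈ A then (-1 : ℝ) else 1) = sgn E A := by
  rw [Finset.prod_ite_mem, Finset.prod_const, sgn]

lemma pow_card_symmDiff_eq (r : ℝ) (T A B : Finset X) (hA : A ⊆ T) (hB : B ⊆ T) :
    r ^ (symmDiff A B).card
      = ∑ E ∈ T.powerset,
          ((1 - r) / 2) ^ E.card * ((1 + r) / 2) ^ (T.card - E.card) * (sgn E A * sgn E B) := by
  have hsub : symmDiff A B ⊆ T := by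
    intro t ht
    rw [Finset.mem_symmDiff] at ht
    rcases ht with ⟨h1, _⟩ | ⟨h1, _⟩
    · exact hA h1
    · exact hB h1
  have lhs_eq : r ^ (symmDiff A B).card = ∏ t ∈ T, (if t ∈ symmDiff A B then r else 1) := by
    rw [Finset.prod_ite_mem, Finset.prod_const,
      Finset.inter_eq_right.mpr hsub]
  have factor_eq : ∀ t ∈ T,
      (if t ∈ symmDiff A B then r else 1)
        = ((1 - r) / 2) * ((if t ∈ A then (-1 : ℝ) else 1) * (if t ∈ B then (-1 : ℝ) else 1))
            + ((1 + r) / 2) := by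
    intro t _
    by_cases ha : t ∈ A <;> by_cases hb : t ∈ B <;>
      simp [Finset.mem_symmDiff, ha, hb] <;> ring
  rw [lhs_eq, Finset.prod_congr rfl factor_eq, Finset.prod_add]
  apply Finset.sum_congr rfl
  intro E hE
  rw [Finset.mem_powerset] at hE
  rw [Finset.prod_const, Finset.card_sdiff_of_subset hE, Finset.prod_mul_distrib,
    Finset.prod_mul_distrib, Finset.prod_const, prod_sgn_factor, prod_sgn_factor]
  ring

lemma sgn_orthogonality (T A B : Finset X) (hA : A ⊆ T) (hB : B ⊆ T) :
    ∑ E ∈ T.powerset, sgn E A * sgn E B = if A = B then (2 : ℝ) ^ T.card else 0 := by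
  have h1 : ∀ E ∈ T.powerset,
      sgn E A * sgn E B
        = (∏ t ∈ E, ((if t ∈ A then (-1 : ℝ) else 1) * (if t ∈ B then (-1 : ℝ) else 1)))
            * ∏ t ∈ T \ E, (1 : ℝ) := by
    intro E _
    rw [Finset.prod_const, one_pow, mul_one, Finset.prod_mul_distrib,
      prod_sgn_factor, prod_sgn_factor]
  rw [Finset.sum_congr rfl h1, ← Finset.prod_add]
  have h2 : ∀ t ∈ T,
      ((if t ∈ A then (-1 : ℝ) else 1) * (if t ∈ B then (-1 : ℝ) else 1) + 1)
        = if t ∈ symmDiff A B then 0 else 2 := by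
    intro t _
    by_cases ha : t ∈ A <;> by_cases hb : t ∈ B <;>
      simp [Finset.mem_symmDiff, ha, hb] <;> ring
  rw [Finset.prod_congr rfl h2]
  by_cases hAB : A = B
  · rw [if_pos hAB]
    have : ∀ t ∈ T, (if t ∈ symmDiff A B then (0 : ℝ) else 2) = 2 := by
      intro t _
      rw [hAB, symmDiff_self]
      simp
    rw [Finset.prod_congr rfl this, Finset.prod_const]
  · rw [if_neg hAB]
    have hne : (symmDiff A B).Nonempty := by
      rw [Finset.nonempty_iff_ne_empty]
      intro h
      exact hAB (symmDiff_eq_bot.mp h)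
    obtain ⟨t, ht⟩ := hne
    have htT : t ∈ T := by
      rw [Finset.mem_symmDiff] at ht
      rcases ht with ⟨h1, _⟩ | ⟨h1, _⟩
      · exact hA h1
      · exact hB h1
    exact Finset.prod_eq_zero htT (by rw [if_pos ht])

/-- Strict positive definiteness of `r^{Hamming}` on distinct subsets of a finite set. -/
lemma hypercube_key (T : Finset X) {n : ℕ} (S : Fin n → Finset X) (hS : ∀ i, S i ⊆ T)
    (hinj : Function.Injective S) (r : ℝ) (hr0 : 0 < r) (hr1 : r < 1) (c : Fin n → ℂ)
    (hc : ∑ i, ∑ j, c i * (starRingEnd ℂ) (c j)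
      * ((r ^ (symmDiff (S i) (S j)).card : ℝ) : ℂ) = 0) :
    ∀ i, c i = 0 := by
  classical
  set μ : Finset X → ℝ := fun E => ((1 - r) / 2) ^ E.card * ((1 + r) / 2) ^ (T.card - E.card)
    with hμdef
  have hμpos : ∀ E, 0 < μ E := by
    intro E
    apply mul_pos <;> apply pow_pos <;> linarith
  set z : Finset X → ℂ := fun E => ∑ i, c i * ((sgn E (S i) : ℝ) : ℂ) with hzdef
  have expand : ∑ i, ∑ j, c i * (starRingEnd ℂ) (c j)
      * ((r ^ (symmDiff (S i) (S j)).card : ℝ) : ℂ)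
      = ∑ E ∈ T.powerset, (μ E : ℂ) * (z E * (starRingEnd ℂ) (z E)) := by
    have e1 : ∀ i j : Fin n, ((r ^ (symmDiff (S i) (S j)).card : ℝ) : ℂ)
        = ∑ E ∈ T.powerset, (μ E : ℂ) * ((sgn E (S i) : ℝ) : ℂ) * ((sgn E (S j) : ℝ) : ℂ) := by
      intro i j
      rw [pow_card_symmDiff_eq r T (S i) (S j) (hS i) (hS j), Complex.ofReal_sum]
      apply Finset.sum_congr rfl
      intro E _
      simp only [hμdef]
      push_cast
      ring
    calc ∑ i, ∑ j, c i * (starRingEnd ℂ) (c j)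
          * ((r ^ (symmDiff (S i) (S j)).card : ℝ) : ℂ)
        = ∑ i, ∑ j, ∑ E ∈ T.powerset, (μ E : ℂ)
            * (c i * ((sgn E (S i) : ℝ) : ℂ))
            * ((starRingEnd ℂ) (c j) * ((sgn E (S j) : ℝ) : ℂ)) := by
          apply Finset.sum_congr rfl; intro i _
          apply Finset.sum_congr rfl; intro j _
          rw [e1 i j, Finset.mul_sum]
          apply Finset.sum_congr rfl; intro E _
          ring
      _ = ∑ E ∈ T.powerset, ∑ i, ∑ j, (μ E : ℂ)
            * (c i * ((sgn E (S i) : ℝ) : ℂ))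
            * ((starRingEnd ℂ) (c j) * ((sgn E (S j) : ℝ) : ℂ)) := by
          have h1 : ∀ i : Fin n, (∑ j, ∑ E ∈ T.powerset, (μ E : ℂ)
              * (c i * ((sgn E (S i) : ℝ) : ℂ))
              * ((starRingEnd ℂ) (c j) * ((sgn E (S j) : ℝ) : ℂ)))
              = ∑ E ∈ T.powerset, ∑ j, (μ E : ℂ)
              * (c i * ((sgn E (S i) : ℝ) : ℂ))
              * ((starRingEnd ℂ) (c j) * ((sgn E (S j) : ℝ) : ℂ)) :=
            fun i => Finset.sum_comm
          simp_rw [h1]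
          exact Finset.sum_comm
      _ = ∑ E ∈ T.powerset, (μ E : ℂ) * (z E * (starRingEnd ℂ) (z E)) := by
          apply Finset.sum_congr rfl; intro E _
          rw [hzdef]
          simp only [map_sum, map_mul, Complex.conj_ofReal, Finset.mul_sum, Finset.sum_mul]
          rw [Finset.sum_comm]
          apply Finset.sum_congr rfl; intro i _
          apply Finset.sum_congr rfl; intro j _
          ring
  rw [expand] at hc
  have hreal : ∑ E ∈ T.powerset, μ E * Complex.normSq (z E) = 0 := by
    have hcast : ((∑ E ∈ T.powerset, μ E * Complex.normSq (z E) : ℝ) : ℂ) = 0 := by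
      push_cast
      rw [← hc]
      apply Finset.sum_congr rfl
      intro E _
      rw [Complex.mul_conj]
    exact_mod_cast hcast
  have hz0 : ∀ E ∈ T.powerset, z E = 0 := by
    intro E hE
    have h1 : ∀ F ∈ T.powerset, 0 ≤ μ F * Complex.normSq (z F) :=
      fun F _ => mul_nonneg (hμpos F).le (Complex.normSq_nonneg _)
    have h2 := (Finset.sum_eq_zero_iff_of_nonneg h1).mp hreal E hE
    rcases mul_eq_zero.mp h2 with h | h
    · exact absurd h (hμpos E).ne'
    · exact Complex.normSq_eq_zero.mp h
  intro k
  have hk : ∑ E ∈ T.powerset, ((sgn E (S k) : ℝ) : ℂ) * z E = 0 :=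
    Finset.sum_eq_zero fun E hE => by rw [hz0 E hE, mul_zero]
  have hswap : ∑ E ∈ T.powerset, ((sgn E (S k) : ℝ) : ℂ) * z E
      = ∑ i, c i * (((∑ E ∈ T.powerset, sgn E (S k) * sgn E (S i)) : ℝ) : ℂ) := by
    rw [hzdef]
    simp only [Finset.mul_sum]
    rw [Finset.sum_comm]
    apply Finset.sum_congr rfl; intro i _
    push_cast
    rw [Finset.mul_sum]
    apply Finset.sum_congr rfl; intro E _
    ring
  rw [hswap] at hk
  have horth : ∀ i : Fin n, (((∑ E ∈ T.powerset, sgn E (S k) * sgn E (S i)) : ℝ) : ℂ)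
      = if k = i then (((2 : ℝ) ^ T.card : ℝ) : ℂ) else 0 := by
    intro i
    rw [sgn_orthogonality T (S k) (S i) (hS k) (hS i)]
    by_cases h : k = i
    · rw [if_pos (by rw [h]), if_pos h]
    · rw [if_neg (fun hh => h (hinj hh)), if_neg h]
      exact Complex.ofReal_zero
  have h2 : ∑ i, c i * (((∑ E ∈ T.powerset, sgn E (S k) * sgn E (S i)) : ℝ) : ℂ)
      = ∑ i, (if k = i then c i * (((2 : ℝ) ^ T.card : ℝ) : ℂ) else 0) :=
    Finset.sum_congr rfl fun i _ => by rw [horth i, mul_ite, mul_zero]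
  rw [h2, Finset.sum_ite_eq, if_pos (Finset.mem_univ k)] at hk
  rcases mul_eq_zero.mp hk with h | h
  · exact h
  · exfalso
    have : ((2 : ℝ) ^ T.card : ℝ) ≠ 0 := pow_ne_zero _ (by norm_num)
    exact this (by exact_mod_cast h)

end Hypercube

end BozejkoAux

open scoped BigOperators

/-- For a Coxeter system `(W,S)` with `S` finite, `0 < r < 1`, and pairwise distinct
`u₁, …, uₙ ∈ W`, the matrix `(r^(ℓ(uᵢ⁻¹uⱼ)))ᵢⱼ` is invertible; equivalently, if
`∑ᵢⱼ cᵢ conj(cⱼ) r^(ℓ(uᵢ⁻¹uⱼ)) = 0` then all `cᵢ = 0`. -/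
theorem coxeter_r_pow_length_matrix_invertible {B W : Type*} [Group W] [Finite B]
    (M : CoxeterMatrix B) (cs : CoxeterSystem M W)
    (r : ℝ) (hr0 : 0 < r) (hr1 : r < 1)
    (n : ℕ) (u : Fin n → W) (hu : Function.Injective u) :
    IsUnit (Matrix.of fun i j : Fin n =>
        ((r ^ cs.length ((u i)⁻¹ * u j) : ℝ) : ℂ)) ∧
    ∀ c : Fin n → ℂ,
      (∑ i, ∑ j, c i * (starRingEnd ℂ) (c j) *
          ((r ^ cs.length ((u i)⁻¹ * u j) : ℝ) : ℂ)) = 0 →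
      ∀ i, c i = 0 := by
  classical
  have key : ∀ c : Fin n → ℂ,
      (∑ i, ∑ j, c i * (starRingEnd ℂ) (c j) *
          ((r ^ cs.length ((u i)⁻¹ * u j) : ℝ) : ℂ)) = 0 →
      ∀ i, c i = 0 := by
    intro c hc
    set S : Fin n → Finset W := fun i => BozejkoAux.NL cs (u i) with hSdef
    have hT : ∀ i, S i ⊆ Finset.univ.biUnion S :=
      fun i => Finset.subset_biUnion_of_mem S (Finset.mem_univ i)
    have hinj : Function.Injective S := fun i j h => hu (BozejkoAux.NL_injective cs h)
    apply BozejkoAux.hypercube_key (Finset.univ.biUnion S) S hT hinj r hr0 hr1 c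
    have hcard : ∀ i j : Fin n, (symmDiff (S i) (S j)).card = cs.length ((u i)⁻¹ * u j) :=
      fun i j => BozejkoAux.card_symmDiff_NL cs (u i) (u j)
    calc ∑ i, ∑ j, c i * (starRingEnd ℂ) (c j)
          * ((r ^ (symmDiff (S i) (S j)).card : ℝ) : ℂ)
        = ∑ i, ∑ j, c i * (starRingEnd ℂ) (c j)
          * ((r ^ cs.length ((u i)⁻¹ * u j) : ℝ) : ℂ) := by
          apply Finset.sum_congr rfl; intro i _
          apply Finset.sum_congr rfl; intro j _
          rw [hcard i j]
      _ = 0 := hc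
  refine ⟨?_, key⟩
  rw [Matrix.isUnit_iff_isUnit_det, isUnit_iff_ne_zero]
  intro hdet
  obtain ⟨v, hv0, hv⟩ := (Matrix.exists_mulVec_eq_zero_iff.mpr hdet)
  have hsum : ∑ i, ∑ j, (starRingEnd ℂ) (v i) * (starRingEnd ℂ) ((starRingEnd ℂ) (v j)) *
      ((r ^ cs.length ((u i)⁻¹ * u j) : ℝ) : ℂ) = 0 := by
    calc ∑ i, ∑ j, (starRingEnd ℂ) (v i) * (starRingEnd ℂ) ((starRingEnd ℂ) (v j)) *
          ((r ^ cs.length ((u i)⁻¹ * u j) : ℝ) : ℂ)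
        = ∑ i, (starRingEnd ℂ) (v i) *
            ∑ j, ((r ^ cs.length ((u i)⁻¹ * u j) : ℝ) : ℂ) * v j := by
          apply Finset.sum_congr rfl; intro i _
          rw [Finset.mul_sum]
          apply Finset.sum_congr rfl; intro j _
          rw [Complex.conj_conj]
          ring
      _ = 0 := by
          apply Finset.sum_eq_zero
          intro i _
          have hvi : ((Matrix.of fun i j : Fin n =>
              ((r ^ cs.length ((u i)⁻¹ * u j) : ℝ) : ℂ)).mulVec v) i = 0 := by
            rw [hv]; rfl
          rw [Matrix.mulVec] at hvi
          rw [show (∑ j, ((r ^ cs.length ((u i)⁻¹ * u j) : ℝ) : ℂ) * v j) = 0 from hvi,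
            mul_zero]
  have hz := key _ hsum
  apply hv0
  funext i
  have := hz i
  simpa using congrArg (starRingEnd ℂ) this
end
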